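/- Proposition 1 (high-probability part, simple-regret decomposition for BayMOTH): Under Assumptions 1–5, for any sequence δ_1, ..., δ_T with δ_t ∈ (0,1), with probability at least 1 − Σ_{t=1}^T |X_t| δ_t − Σ_{t=1}^T p_t, the simple regret of BayMOTH satisfies r_T^BM ≤ r_T† + max_{1 ≤ t ≤ T} g_t† L_t (η_t + σ_t/√(M δ_t)). Precisely: on the intersection of the event that g_t = g_t† for all t (whose complement has probability at most Σ p_t by Assumption 2) and the event that for every round t with g_t† = 1 the Monte Carlo error satisfies |Ĵ_{t,M}(x) − J_t^{meta,*}(x)| ≤ σ_t/√(M δ_t) for all x ∈ X_t (whose complement has probability at most Σ |X_t| δ_t by Chebyshev's inequality and the union bound, using Var(Ĵ_{t,M}(x)) = σ_t(x)²/M from Assumption 4), the per-round acquisition discrepancy sup_{x ∈ X_t} |Â_t^BM(x) − A_t†(x)| ≤ g_t† (η_t + σ_t/√(M δ_t)) (using Assumption 3 when g_t† = 1, and equality of the fallback branches when g_t† = 0), which by the stability Assumption 5 gives f(x_t†) − f(x_t^BM) ≤ g_t† L_t (η_t + σ_t/√(M δ_t)) for every t, and hence r_T^BM ≤ r_T† +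 max_{1 ≤ t ≤ T} g_t† L_t (η_t + σ_t/√(M δ_t)). -/

import Mathlib

open MeasureTheory ProbabilityTheory

/-!
On the event that BayMOTH's gate agrees with the oracle gate in every round and every Monte Carlo
estimate lies within `σ_t / √(M δ_t)` of its mean, the two acquisitions differ on `X_t` by at most
`η_t + σ_t / √(M δ_t)` on meta rounds and coincide on fallback rounds. Stability turns this into a
per-round gap `f(x_t†) − f(x_t^BM) ≤ g_t† L_t (η_t + σ_t / √(M δ_t))`, and taking the maximum over
rounds bounds the difference of simple regrets. The complement of the event is covered by the
routing-disagreement events and, through Chebyshev's inequality, by the Monte Carlo deviation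
events; a union bound gives its probability.
-/

section Probability

variable {Ω : Type*} [MeasurableSpace Ω] {μ : Measure Ω}

theorem meas_lt_abs_sub_integral_le_of_variance_le [IsFiniteMeasure μ] {J : Ω → ℝ}
    (hJ : MemLp J 2 μ) {c δ : ℝ} (hc : 0 ≤ c) (hvar : variance J μ ≤ δ * c ^ 2) :
    μ {ω | c < |J ω - μ[J]|} ≤ ENNReal.ofReal δ := by
  rcases hc.eq_or_lt with rfl | hc
  · have hconst := ae_eq_integral_of_variance_eq_zero hJ
      (le_antisymm (by simpa using hvar) (variance_nonneg J μ))
    refine (measure_mono_null (fun ω hω => ?_) (ae_iff.1 hconst)).trans_le zero_le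
    exact sub_ne_zero.1 (abs_pos.1 hω)
  · calc μ {ω | c < |J ω - μ[J]|} ≤ μ {ω | c ≤ |J ω - μ[J]|} :=
          measure_mono <| Set.ofPred_subset_ofPred.2 fun _ => le_of_lt
      _ ≤ ENNReal.ofReal (variance J μ / c ^ 2) := meas_ge_le_variance_div_sq hJ hc
      _ ≤ ENNReal.ofReal δ := ENNReal.ofReal_le_ofReal ((div_le_iff₀ (by positivity)).2 hvar)

theorem meas_div_sqrt_lt_abs_sub_integral_le [IsFiniteMeasure μ] {J : Ω → ℝ} (hJ : MemLp J 2 μ)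
    {M : ℕ} {s σ δ : ℝ} (hvar : variance J μ = s ^ 2 / M) (hs : 0 ≤ s) (hsσ : s ≤ σ)
    (hδ : 0 < δ) : μ {ω | σ / √(M * δ) < |J ω - μ[J]|} ≤ ENNReal.ofReal δ := by
  refine meas_lt_abs_sub_integral_le_of_variance_le hJ
    (div_nonneg (hs.trans hsσ) (Real.sqrt_nonneg _)) ?_
  have hbound : δ * (σ / √(M * δ)) ^ 2 = σ ^ 2 / M := by
    rw [div_pow, Real.sq_sqrt (by positivity), mul_div_assoc', mul_comm (M : ℝ) δ,
      mul_div_mul_left _ _ hδ.ne']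
  rw [hvar, hbound]
  gcongr

theorem measure_biUnion_le_ofReal_sum {ι : Type*} (s : Finset ι) (A : ι → Set Ω) {p : ι → ℝ}
    (hp : ∀ i ∈ s, 0 ≤ p i) (hA : ∀ i ∈ s, μ (A i) ≤ ENNReal.ofReal (p i)) :
    μ (⋃ i ∈ s, A i) ≤ ENNReal.ofReal (∑ i ∈ s, p i) := by
  rw [ENNReal.ofReal_sum_of_nonneg hp]
  exact (measure_biUnion_finset_le s A).trans (Finset.sum_le_sum hA)

theorem measure_iUnion_union_biUnion_le {ι D : Type*} [Fintype ι] (X : ι → Finset D)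
    (A : ι → Set Ω) (B : ι → D → Set Ω) {p δ : ι → ℝ} (hp : ∀ i, 0 ≤ p i) (hδ : ∀ i, 0 ≤ δ i)
    (hA : ∀ i, μ (A i) ≤ ENNReal.ofReal (p i))
    (hB : ∀ i, ∀ x ∈ X i, μ (B i x) ≤ ENNReal.ofReal (δ i)) :
    μ (⋃ i, (A i ∪ ⋃ x ∈ X i, B i x))
      ≤ ENNReal.ofReal ((∑ i, ((X i).card : ℝ) * δ i) + ∑ i, p i) := by
  have hcard : ∀ i, 0 ≤ ((X i).card : ℝ) * δ i := fun i => mul_nonneg (Nat.cast_nonneg _) (hδ i)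
  have hround : ∀ i, μ (A i ∪ ⋃ x ∈ X i, B i x)
      ≤ ENNReal.ofReal (((X i).card : ℝ) * δ i + p i) := by
    intro i
    have hBi := measure_biUnion_le_ofReal_sum (X i) (B i) (fun _ _ => hδ i) (hB i)
    rw [Finset.sum_const, nsmul_eq_mul] at hBi
    rw [ENNReal.ofReal_add (hcard i) (hp i), add_comm]
    exact (measure_union_le _ _).trans (add_le_add (hA i) hBi)
  rw [← Finset.sum_add_distrib]
  simpa using measure_biUnion_le_ofReal_sum Finset.univ _
    (fun i _ => add_nonneg (hcard i) (hp i)) (fun i _ => hround i)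

theorem ofReal_one_sub_le_measure [IsProbabilityMeasure μ] {s : Set Ω} {r : ℝ} (hr : 0 ≤ r)
    (hs : μ sᶜ ≤ ENNReal.ofReal r) : ENNReal.ofReal (1 - r) ≤ μ s := by
  rw [ENNReal.ofReal_sub _ hr, ENNReal.ofReal_one, tsub_le_iff_right]
  calc 1 = μ Set.univ := measure_univ.symm
    _ ≤ μ s + μ sᶜ := measure_univ_le_add_compl s
    _ ≤ μ s + ENNReal.ofReal r := add_le_add le_rfl hs

end Probability

theorem sub_sup'_le_sub_sup'_add_sup' {ι : Type*} {s : Finset ι} (hs : s.Nonempty)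
    {a b e : ι → ℝ} (h : ∀ i ∈ s, a i ≤ b i + e i) (c : ℝ) :
    c - s.sup' hs b ≤ (c - s.sup' hs a) + s.sup' hs e := by
  have hsup : s.sup' hs a ≤ s.sup' hs b + s.sup' hs e := Finset.sup'_le hs a fun i hi =>
    (h i hi).trans (add_le_add (Finset.le_sup' b hi) (Finset.le_sup' e hi))
  linarith

theorem abs_sub_gated_acquisition_le {D : Type*} {X : Finset D} {gate gdag : Bool}
    {ABM A2OPT AmetaStar AmetaDag err : D → ℝ} {η c : ℝ} (hgate : gate = gdag)
    (hfallback : gate = false → ABM = A2OPT)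
    (hmeta : gate = true → ∀ x ∈ X, ABM x - AmetaStar x = err x)
    (hA3 : gate = true → gdag = true → ∀ x ∈ X, |AmetaStar x - AmetaDag x| ≤ η)
    (herr : ∀ x ∈ X, |err x| ≤ c) :
    ∀ x ∈ X, |ABM x - (if gdag then AmetaDag else A2OPT) x| ≤ if gdag then η + c else 0 := by
  subst hgate
  intro x hx
  cases gate
  · simp [hfallback rfl]
  · have hstep := abs_sub_le (ABM x) (AmetaStar x) (AmetaDag x)
    rw [hmeta rfl x hx] at hstep
    simp only [if_true]
    linarith [hA3 rfl rfl x hx, herr x hx]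

theorem baymoth_regret_high_probability_general
    {Ω : Type*} [MeasurableSpace Ω] (μ : Measure Ω) [IsProbabilityMeasure μ]
    {D : Type*}
    -- objective and its upper bound
    (f : D → ℝ) (fstar : ℝ)
    -- rounds and candidate sets
    (T : ℕ) (hT : 0 < T)
    (X : Fin T → Finset D) (hX : ∀ t, (X t).Nonempty)
    -- Monte Carlo sample count
    (M : ℕ)
    -- gates: BayMOTH's (random) gate and the deterministic oracle gate
    (g : Fin T → Ω → Bool) (gdag : Fin T → Bool)
    -- per-round constants
    (p δ η L σt : Fin T → ℝ) (σx : Fin T → D → ℝ)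
    (hp : ∀ t, 0 ≤ p t)
    (hδ : ∀ t, δ t ∈ Set.Ioo (0 : ℝ) 1)
    (hσx : ∀ t x, 0 ≤ σx t x)
    (hσt : ∀ t, σt t = (X t).sup' (hX t) (σx t))
    -- acquisitions (random functions of the history, hence of ω)
    (ABM A2OPT AmetaStar AmetaDag Adag : Fin T → Ω → D → ℝ)
    -- oracle-gated comparator acquisition
    (hAdag : ∀ t ω, Adag t ω = if gdag t then AmetaDag t ω else A2OPT t ω)
    -- BayMOTH acquisition: fallback branch when the gate is off
    (hfallback : ∀ t ω, g t ω = false → ABM t ω = A2OPT t ω)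
    -- Monte Carlo estimator of the meta branch
    (Jhat : Fin T → D → Ω → ℝ) (Jstar : Fin T → D → ℝ)
    -- BayMOTH acquisition minus exact meta acquisition equals MC error on meta rounds
    (hmetaMC : ∀ t ω, g t ω = true →
      ∀ x ∈ X t, ABM t ω x - AmetaStar t ω x = Jhat t x ω - Jstar t x)
    -- Assumption 2 (meta-vs-fallback branch disagreement probability)
    (hA2 : ∀ t, μ {ω | g t ω ≠ gdag t} ≤ ENNReal.ofReal (p t))
    -- Assumption 3 (within-meta-branch virtual-environment selection error)
    (hA3 : ∀ t ω, g t ω = true → gdag t = true →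
      ∀ x ∈ X t, |AmetaStar t ω x - AmetaDag t ω x| ≤ η t)
    -- Assumption 4 (Monte Carlo approximation error: unbiased with variance σx²/M)
    (hL2 : ∀ t x, MemLp (Jhat t x) 2 μ)
    (hmean : ∀ t x, (∫ ω, Jhat t x ω ∂μ) = Jstar t x)
    (hvar : ∀ t x, variance (Jhat t x) μ = (σx t x) ^ 2 / M)
    -- Assumption 5 (acquisition-to-value stability)
    (hA5 : ∀ t, ∀ (A Atil : D → ℝ) (xA xAtil : D),
      xA ∈ X t → xAtil ∈ X t →
      (∀ x ∈ X t, A x ≤ A xA) → (∀ x ∈ X t, Atil x ≤ Atil xAtil) →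
      ∀ ε : ℝ, (∀ x ∈ X t, |A x - Atil x| ≤ ε) →
        f xAtil - f xA ≤ L t * ε)
    -- selected points: BayMOTH maximizes its acquisition, the comparator maximizes A†
    (xBM xdag : Fin T → Ω → D)
    (hmemBM : ∀ t ω, xBM t ω ∈ X t)
    (hargBM : ∀ t ω, ∀ x ∈ X t, ABM t ω x ≤ ABM t ω (xBM t ω))
    (hmemdag : ∀ t ω, xdag t ω ∈ X t)
    (hargdag : ∀ t ω, ∀ x ∈ X t, Adag t ω x ≤ Adag t ω (xdag t ω)) :
    -- conclusion: with probability at least 1 − ∑ |X_t| δ_t − ∑ p_t,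
    -- r_T^BM ≤ r_T† + max_t g_t† L_t (η_t + σ_t / √(M δ_t))
    ENNReal.ofReal (1 - ((∑ t, ((X t).card : ℝ) * δ t) + ∑ t, p t))
      ≤ μ {ω |
        fstar - Finset.univ.sup' (Finset.univ_nonempty_iff.mpr ⟨⟨0, hT⟩⟩)
            (fun t => f (xBM t ω))
          ≤ (fstar - Finset.univ.sup' (Finset.univ_nonempty_iff.mpr ⟨⟨0, hT⟩⟩)
            (fun t => f (xdag t ω)))
            + Finset.univ.sup' (Finset.univ_nonempty_iff.mpr ⟨⟨0, hT⟩⟩)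
            (fun t => if gdag t then
              L t * (η t + σt t / Real.sqrt (M * δ t)) else 0)} := by
  set E : Set Ω := {ω | ∀ t, g t ω = gdag t ∧
    ∀ x ∈ X t, |Jhat t x ω - Jstar t x| ≤ σt t / √(M * δ t)} with hE
  have hbad : μ Eᶜ ≤ ENNReal.ofReal ((∑ t, ((X t).card : ℝ) * δ t) + ∑ t, p t) := by
    refine (measure_mono ?_).trans (measure_iUnion_union_biUnion_le X
      (fun t => {ω | g t ω ≠ gdag t})
      (fun t x => {ω | σt t / √(M * δ t) < |Jhat t x ω - Jstar t x|})
      hp (fun t => (hδ t).1.le) hA2 fun t x hx => ?_)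
    · intro ω hω
      contrapose! hω
      simpa [hE] using hω
    · simpa [hmean t x] using meas_div_sqrt_lt_abs_sub_integral_le (hL2 t x) (hvar t x)
        (hσx t x) (hσt t ▸ Finset.le_sup' (σx t) hx) (hδ t).1
  refine (ofReal_one_sub_le_measure (add_nonneg (Finset.sum_nonneg fun t _ =>
    mul_nonneg (Nat.cast_nonneg _) (hδ t).1.le) (Finset.sum_nonneg fun t _ => hp t))
    hbad).trans (measure_mono fun ω hω => ?_)
  refine sub_sup'_le_sub_sup'_add_sup' _ (fun t _ => ?_) fstar
  obtain ⟨hgt, hJ⟩ := hω t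
  have hgap := hA5 t _ _ _ _ (hmemBM t ω) (hmemdag t ω) (hargBM t ω) (hargdag t ω) _
    (hAdag t ω ▸ abs_sub_gated_acquisition_le hgt (hfallback t ω) (hmetaMC t ω) (hA3 t ω) hJ)
  rw [mul_ite, mul_zero] at hgap
  linarith

/-- Proposition 1 (high-probability part, simple-regret decomposition for BayMOTH).
Under Assumptions 1–5, for any `δ_t ∈ (0,1)`, with probability at least
`1 − ∑_t |X_t| δ_t − ∑_t p_t`, the simple regret of BayMOTH satisfies
`r_T^BM ≤ r_T† + max_t g_t† L_t (η_t + σ_t/√(M δ_t))`. -/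
theorem baymoth_regret_high_probability
    {Ω : Type*} [MeasurableSpace Ω] (μ : Measure Ω) [IsProbabilityMeasure μ]
    {D : Type*}
    -- objective and its upper bound
    (f : D → ℝ) (fstar : ℝ) (hstar : ∀ d, f d ≤ fstar)
    -- Assumption 1 (bounded objective)
    (B : ℝ) (hB : 0 < B) (hA1 : ∀ d, 0 ≤ f d ∧ f d ≤ B)
    -- rounds and candidate sets
    (T : ℕ) (hT : 0 < T)
    (X : Fin T → Finset D) (hX : ∀ t, (X t).Nonempty)
    -- Monte Carlo sample count
    (M : ℕ) (hM : 0 < M)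
    -- gates: BayMOTH's (random) gate and the deterministic oracle gate
    (g : Fin T → Ω → Bool) (gdag : Fin T → Bool)
    -- per-round constants
    (p δ η L σt : Fin T → ℝ) (σx : Fin T → D → ℝ)
    (hp : ∀ t, 0 ≤ p t)
    (hδ : ∀ t, δ t ∈ Set.Ioo (0 : ℝ) 1)
    (hη : ∀ t, 0 ≤ η t)
    (hL : ∀ t, 0 < L t)
    (hσx : ∀ t x, 0 ≤ σx t x)
    (hσt : ∀ t, σt t = (X t).sup' (hX t) (σx t))
    -- acquisitions (random functions of the history, hence of ω)
    (ABM A2OPT AmetaStar AmetaDag Adag : Fin T → Ω → D → ℝ)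
    -- oracle-gated comparator acquisition
    (hAdag : ∀ t ω, Adag t ω = if gdag t then AmetaDag t ω else A2OPT t ω)
    -- BayMOTH acquisition: fallback branch when the gate is off
    (hfallback : ∀ t ω, g t ω = false → ABM t ω = A2OPT t ω)
    -- Monte Carlo estimator of the meta branch
    (Jhat : Fin T → D → Ω → ℝ) (Jstar : Fin T → D → ℝ)
    -- BayMOTH acquisition minus exact meta acquisition equals MC error on meta rounds
    (hmetaMC : ∀ t ω, g t ω = true →
      ∀ x ∈ X t, ABM t ω x - AmetaStar t ω x = Jhat t x ω - Jstar t x)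
    -- Assumption 2 (meta-vs-fallback branch disagreement probability)
    (hA2 : ∀ t, μ {ω | g t ω ≠ gdag t} ≤ ENNReal.ofReal (p t))
    -- Assumption 3 (within-meta-branch virtual-environment selection error)
    (hA3 : ∀ t ω, g t ω = true → gdag t = true →
      ∀ x ∈ X t, |AmetaStar t ω x - AmetaDag t ω x| ≤ η t)
    -- Assumption 4 (Monte Carlo approximation error: unbiased with variance σx²/M)
    (hL2 : ∀ t x, MemLp (Jhat t x) 2 μ)
    (hmean : ∀ t x, (∫ ω, Jhat t x ω ∂μ) = Jstar t x)
    (hvar : ∀ t x, variance (Jhat t x) μ = (σx t x) ^ 2 / M)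
    -- Assumption 5 (acquisition-to-value stability)
    (hA5 : ∀ t, ∀ (A Atil : D → ℝ) (xA xAtil : D),
      xA ∈ X t → xAtil ∈ X t →
      (∀ x ∈ X t, A x ≤ A xA) → (∀ x ∈ X t, Atil x ≤ Atil xAtil) →
      ∀ ε : ℝ, (∀ x ∈ X t, |A x - Atil x| ≤ ε) →
        f xAtil - f xA ≤ L t * ε)
    -- selected points: BayMOTH maximizes its acquisition, the comparator maximizes A†
    (xBM xdag : Fin T → Ω → D)
    (hmemBM : ∀ t ω, xBM t ω ∈ X t)
    (hargBM : ∀ t ω, ∀ x ∈ X t, ABM t ω x ≤ ABM t ω (xBM t ω))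
    (hmemdag : ∀ t ω, xdag t ω ∈ X t)
    (hargdag : ∀ t ω, ∀ x ∈ X t, Adag t ω x ≤ Adag t ω (xdag t ω)) :
    -- conclusion: with probability at least 1 − ∑ |X_t| δ_t − ∑ p_t,
    -- r_T^BM ≤ r_T† + max_t g_t† L_t (η_t + σ_t / √(M δ_t))
    ENNReal.ofReal (1 - ((∑ t, ((X t).card : ℝ) * δ t) + ∑ t, p t))
      ≤ μ {ω |
        fstar - Finset.univ.sup' (Finset.univ_nonempty_iff.mpr ⟨⟨0, hT⟩⟩)
            (fun t => f (xBM t ω))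
          ≤ (fstar - Finset.univ.sup' (Finset.univ_nonempty_iff.mpr ⟨⟨0, hT⟩⟩)
            (fun t => f (xdag t ω)))
            + Finset.univ.sup' (Finset.univ_nonempty_iff.mpr ⟨⟨0, hT⟩⟩)
            (fun t => if gdag t then
              L t * (η t + σt t / Real.sqrt (M * δ t)) else 0)} :=
  baymoth_regret_high_probability_general μ f fstar T hT X hX M g gdag p δ η L σt σx hp hδ hσx hσt
    ABM A2OPT AmetaStar AmetaDag Adag hAdag hfallback Jhat Jstar hmetaMC hA2 hA3 hL2 hmean hvar hA5
    xBM xdag hmemBM hargBM hmemdag hargdag
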